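/- Let ≻₁ and ≻₂ be hope-and-prepare preferences with representations (u, C₁, D₁) and (u, C₂, D₂) respectively, with the same utility function u. Then ≻₁ is more ambiguity averse than ≻₂ if and only if C₂ ⊆ C₁. -/

import Mathlib

/-!
Since `C ∩ D ≠ ∅`, the worst case over `C` of `∫ u(f) dp` never exceeds the best case over `D`,
so `f ≻ x` holds exactly when `u(x) < min_{p ∈ C} ∫ u(f) dp`. As `u(X)` is an interval
containing all these values, `≻₁` is more ambiguity averse than `≻₂` iff
`min_{C₁} ∫ u(f) ≤ min_{C₂} ∫ u(f)` for every act `f`, which holds when `C₂ ⊆ C₁`.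
Conversely, if `q ∈ C₂ \ C₁`, separating `q` from the compact convex set `C₁` in the weak*
topology uses only finitely many events `Aᵢ`: `∑ cᵢ q(Aᵢ) < t < ∑ cᵢ p(Aᵢ)` for all `p ∈ C₁`.
Mixing two outcomes of different utility on the atoms generated by the `Aᵢ`, with weights affine
in `∑_{s ∈ Aᵢ} cᵢ`, gives an act whose expected utility is an increasing affine function of
`∑ cᵢ p(Aᵢ)`, hence has a smaller worst case over `C₂` than over `C₁`.
-/

open Set

section Framework

variable (S : Type*) [MeasurableSpace S]

/-- The measurable sets (events) of `S`, as a subtype. -/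
abbrev MSet := {A : Set S // MeasurableSet A}

/-- Finitely additive probability measures on `(S, Σ)`, viewed as real-valued
set functions on events.  The weak* topology is the topology of pointwise
convergence on events, i.e. the product topology on `MSet S → ℝ`. -/
def ProbCharges : Set (MSet S → ℝ) :=
  {p | (∀ A, 0 ≤ p A) ∧ p ⟨Set.univ, MeasurableSet.univ⟩ = 1 ∧
    ∀ A B : MSet S, Disjoint A.1 B.1 → p ⟨A.1 ∪ B.1, A.2.union B.2⟩ = p A + p B}

end Framework

section Fns

variable {S : Type*} [MeasurableSpace S]

/-- `φ : S → ℝ` is a measurable simple function (an element of `B₀(Σ)`). -/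
def IsSimpleFn (φ : S → ℝ) : Prop :=
  (Set.range φ).Finite ∧ ∀ y : ℝ, MeasurableSet (φ ⁻¹' {y})

/-- The integral `∫ φ dp` of a simple function `φ` against a finitely additive
measure `p` (junk value `0` if `φ` is not simple). -/
noncomputable def fInt (p : MSet S → ℝ) (φ : S → ℝ) : ℝ :=
  @dite _ (IsSimpleFn φ) (Classical.dec _)
    (fun h => ∑ y ∈ h.1.toFinset, y * p ⟨φ ⁻¹' {y}, h.2 y⟩) (fun _ => 0)

/-- A functional `I : B₀(Σ) → ℝ` is monotonic. -/
def MonotonicFn (I : (S → ℝ) → ℝ) : Prop :=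
  ∀ φ ψ, IsSimpleFn φ → IsSimpleFn ψ → (∀ s, φ s ≤ ψ s) → I φ ≤ I ψ

/-- A functional `I : B₀(Σ) → ℝ` is constant-linear: `I(aφ + b) = a I(φ) + b`
for `a ≥ 0`, `b ∈ ℝ`. -/
def ConstLinearFn (I : (S → ℝ) → ℝ) : Prop :=
  ∀ φ, IsSimpleFn φ → ∀ a : ℝ, 0 ≤ a → ∀ b : ℝ,
    I (fun s => a * φ s + b) = a * I φ + b

end Fns

section Acts

variable {S : Type*} [MeasurableSpace S] {V : Type*} [AddCommGroup V] [Module ℝ V]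

/-- `f : S → V` is a simple act with outcomes in `X`: it is `X`-valued,
takes finitely many values and is `Σ`-measurable. -/
def IsAct (X : Set V) (f : S → V) : Prop :=
  (∀ s, f s ∈ X) ∧ (Set.range f).Finite ∧ ∀ v : V, MeasurableSet (f ⁻¹' {v})

/-- Pointwise mixture `αf + (1-α)g` of two acts. -/
def mixAct (α : ℝ) (f g : S → V) : S → V := fun s => α • f s + (1 - α) • g s

/-- The constant act with outcome `x`. -/
def constAct (S : Type*) {V : Type*} (x : V) : S → V := fun _ => x

/-- `u : V → ℝ` is affine on the convex set `X`. -/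
def IsAffineOn (u : V → ℝ) (X : Set V) : Prop :=
  ∀ x ∈ X, ∀ y ∈ X, ∀ α : ℝ, 0 ≤ α → α ≤ 1 →
    u (α • x + (1 - α) • y) = α * u x + (1 - α) * u y

/-- `u` is non-constant on `X`. -/
def NonConstOn (u : V → ℝ) (X : Set V) : Prop := ∃ x ∈ X, ∃ y ∈ X, u x ≠ u y

/-- Expected utility `∫ u(f) dp` of the act `f` under the measure `p`. -/
noncomputable def EU (u : V → ℝ) (f : S → V) (p : MSet S → ℝ) : ℝ :=
  fInt p (fun s => u (f s))

/-- Worst-case expected utility of `f` over the set of scenarios `C`. -/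
noncomputable def minEU (u : V → ℝ) (C : Set (MSet S → ℝ)) (f : S → V) : ℝ :=
  sInf (EU u f '' C)

/-- Best-case expected utility of `f` over the set of scenarios `D`. -/
noncomputable def maxEU (u : V → ℝ) (D : Set (MSet S → ℝ)) (f : S → V) : ℝ :=
  sSup (EU u f '' D)

/-- `f` and `g` are incomparable (`f ⋈ g`). -/
def Incomp (R : (S → V) → (S → V) → Prop) (f g : S → V) : Prop := ¬ R f g ∧ ¬ R g f

end Acts

section Axioms

variable {S : Type*} [MeasurableSpace S] {V : Type*} [AddCommGroup V] [Module ℝ V]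
variable (X : Set V) (R : (S → V) → (S → V) → Prop)

/-- Axiom 1: `≻` is asymmetric and transitive on acts, and its restriction to
constant acts is non-trivial and negatively transitive. -/
def PrefAx1 : Prop :=
  (∀ f g, IsAct X f → IsAct X g → R f g → ¬ R g f) ∧
  (∀ f g h, IsAct X f → IsAct X g → IsAct X h → R f g → R g h → R f h) ∧
  (∃ x ∈ X, ∃ y ∈ X, R (constAct S x) (constAct S y)) ∧
  (∀ x ∈ X, ∀ y ∈ X, ∀ z ∈ X, ¬ R (constAct S x) (constAct S y) →
    ¬ R (constAct S y) (constAct S z) → ¬ R (constAct S x) (constAct S z))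

/-- Axiom 2 (continuity). -/
def PrefAx2 : Prop :=
  ∀ f g h, IsAct X f → IsAct X g → IsAct X h →
    IsOpen {α : Set.Icc (0 : ℝ) 1 | R (mixAct (α : ℝ) f g) h} ∧
    IsOpen {α : Set.Icc (0 : ℝ) 1 | R h (mixAct (α : ℝ) f g)}

/-- Axiom 3 (certainty independence). -/
def PrefAx3 : Prop :=
  ∀ f g, IsAct X f → IsAct X g → ∀ x ∈ X, ∀ α : ℝ, 0 < α → α < 1 →
    (R f g ↔ R (mixAct α f (constAct S x)) (mixAct α g (constAct S x)))

/-- Axiom 4: for any outcome `x`, the upper and lower contour sets at the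
constant act `x` are convex. -/
def PrefAx4 : Prop :=
  ∀ x ∈ X,
    (∀ f g, IsAct X f → IsAct X g → R f (constAct S x) → R g (constAct S x) →
      ∀ α : ℝ, 0 ≤ α → α ≤ 1 → R (mixAct α f g) (constAct S x)) ∧
    (∀ f g, IsAct X f → IsAct X g → R (constAct S x) f → R (constAct S x) g →
      ∀ α : ℝ, 0 ≤ α → α ≤ 1 → R (constAct S x) (mixAct α f g))

/-- Axiom 5 (monotonicity). -/
def PrefAx5 : Prop :=
  ∀ f g, IsAct X f → IsAct X g →
    (∀ s : S, R (constAct S (f s)) (constAct S (g s))) → R f g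

/-- Axiom 6: if every outcome incomparable to `f` is incomparable to `g`,
then `f` and `g` are incomparable. -/
def PrefAx6 : Prop :=
  ∀ f g, IsAct X f → IsAct X g →
    (∀ x ∈ X, Incomp R f (constAct S x) → Incomp R g (constAct S x)) → Incomp R f g

/-- Axiom 7: if `f ⋈ x`, `x ≻ g`, `g ⋈ y` and `f ≻ y`, then `f ≻ g`. -/
def PrefAx7 : Prop :=
  ∀ f g, IsAct X f → IsAct X g → ∀ x ∈ X, ∀ y ∈ X,
    Incomp R f (constAct S x) → R (constAct S x) g →
    Incomp R g (constAct S y) → R f (constAct S y) → R f g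

end Axioms

section Reps

variable {S : Type*} [MeasurableSpace S] {V : Type*} [AddCommGroup V] [Module ℝ V]

/-- `(u, C, D)` is a hope-and-prepare representation of `R`. -/
def IsHPRep (X : Set V) (R : (S → V) → (S → V) → Prop) (u : V → ℝ)
    (C D : Set (MSet S → ℝ)) : Prop :=
  IsAffineOn u X ∧ NonConstOn u X ∧
  C.Nonempty ∧ D.Nonempty ∧ C ⊆ ProbCharges S ∧ D ⊆ ProbCharges S ∧
  IsCompact C ∧ IsCompact D ∧ Convex ℝ C ∧ Convex ℝ D ∧ (C ∩ D).Nonempty ∧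
  ∀ f g, IsAct X f → IsAct X g →
    (R f g ↔ (minEU u C g < minEU u C f ∧ maxEU u D g < maxEU u D f))

/-- `(u, C)` is a Bewley representation of `R`. -/
def IsBewleyRep (X : Set V) (R : (S → V) → (S → V) → Prop) (u : V → ℝ)
    (C : Set (MSet S → ℝ)) : Prop :=
  IsAffineOn u X ∧ NonConstOn u X ∧
  C.Nonempty ∧ C ⊆ ProbCharges S ∧ IsCompact C ∧ Convex ℝ C ∧
  ∀ f g, IsAct X f → IsAct X g → (R f g ↔ ∀ p ∈ C, EU u g p < EU u f p)

/-- `(u, C, D)` is a twofold multi-prior representation of `R`. -/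
def IsTwofoldRep (X : Set V) (R : (S → V) → (S → V) → Prop) (u : V → ℝ)
    (C D : Set (MSet S → ℝ)) : Prop :=
  IsAffineOn u X ∧ NonConstOn u X ∧
  C.Nonempty ∧ D.Nonempty ∧ C ⊆ ProbCharges S ∧ D ⊆ ProbCharges S ∧
  IsCompact C ∧ IsCompact D ∧ Convex ℝ C ∧ Convex ℝ D ∧ (C ∩ D).Nonempty ∧
  ∀ f g, IsAct X f → IsAct X g → (R f g ↔ maxEU u D g < minEU u C f)

end Reps

section ProbCharge

variable {S : Type*} [MeasurableSpace S] {p : MSet S → ℝ}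

lemma probCharge_congr (p : MSet S → ℝ) {s t : Set S} {hs : MeasurableSet s}
    {ht : MeasurableSet t} (h : s = t) : p ⟨s, hs⟩ = p ⟨t, ht⟩ := by
  subst h; rfl

lemma probCharge_empty (hp : p ∈ ProbCharges S) : p ⟨∅, MeasurableSet.empty⟩ = 0 := by
  have h := hp.2.2 ⟨∅, .empty⟩ ⟨∅, .empty⟩ (disjoint_empty _)
  rw [probCharge_congr p (ht := .empty) (union_empty _)] at h
  linarith

lemma measurableSet_preimage_finset {ι : Type*} {τ : S → ι}
    (hτ : ∀ i, MeasurableSet (τ ⁻¹' {i})) (T : Finset ι) : MeasurableSet (τ ⁻¹' T) := by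
  rw [← biUnion_preimage_singleton]
  exact Finset.measurableSet_biUnion T fun i _ => hτ i

lemma probCharge_preimage_finset (hp : p ∈ ProbCharges S) {ι : Type*} {τ : S → ι}
    (hτ : ∀ i, MeasurableSet (τ ⁻¹' {i})) (T : Finset ι) :
    p ⟨τ ⁻¹' T, measurableSet_preimage_finset hτ T⟩ = ∑ i ∈ T, p ⟨τ ⁻¹' {i}, hτ i⟩ := by
  classical
  induction T using Finset.induction_on with
  | empty => simpa using probCharge_empty hp
  | @insert a T ha ih =>
    have hdisj : Disjoint (τ ⁻¹' {a}) (τ ⁻¹' T) :=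
      disjoint_singleton_left.mpr ha |>.preimage τ
    have h := hp.2.2 ⟨_, hτ a⟩ ⟨_, measurableSet_preimage_finset hτ T⟩ hdisj
    rw [Finset.sum_insert ha, ← ih, ← h]
    exact probCharge_congr p (by rw [Finset.coe_insert, insert_eq, preimage_union])

lemma sum_probCharge_fibres_eq_one (hp : p ∈ ProbCharges S) {ι : Type*} {τ : S → ι}
    (hτ : ∀ i, MeasurableSet (τ ⁻¹' {i})) {T : Finset ι} (hT : ∀ s, τ s ∈ T) :
    ∑ i ∈ T, p ⟨τ ⁻¹' {i}, hτ i⟩ = 1 := by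
  rw [← probCharge_preimage_finset hp hτ, ← hp.2.1]
  exact probCharge_congr p (eq_univ_of_forall hT)

end ProbCharge

section SimpleIntegral

variable {S : Type*} {ι β : Type*} {τ : S → ι} {T : Finset ι}

lemma preimage_comp_singleton_eq [DecidableEq β] (hT : ∀ s, τ s ∈ T) (g : ι → β) (y : β) :
    (fun s => g (τ s)) ⁻¹' {y} = τ ⁻¹' ↑(T.filter (g · = y)) := by
  ext s; simp [hT s]

lemma finite_range_comp (hT : ∀ s, τ s ∈ T) (g : ι → β) : (range fun s => g (τ s)).Finite :=
  (T.finite_toSet.image g).subset (range_subset_iff.mpr fun s => ⟨τ s, hT s, rfl⟩)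

variable [MeasurableSpace S] {p : MSet S → ℝ}

lemma measurableSet_preimage_comp_singleton (hτ : ∀ i, MeasurableSet (τ ⁻¹' {i}))
    (hT : ∀ s, τ s ∈ T) (g : ι → β) (y : β) : MeasurableSet ((fun s => g (τ s)) ⁻¹' {y}) := by
  classical
  exact preimage_comp_singleton_eq hT g y ▸ measurableSet_preimage_finset hτ _

lemma fInt_comp_eq_sum (hp : p ∈ ProbCharges S) (hτ : ∀ i, MeasurableSet (τ ⁻¹' {i}))
    (hT : ∀ s, τ s ∈ T) (g : ι → ℝ) :
    fInt p (fun s => g (τ s)) = ∑ i ∈ T, g i * p ⟨τ ⁻¹' {i}, hτ i⟩ := by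
  classical
  have hsimple : IsSimpleFn (fun s => g (τ s)) :=
    ⟨finite_range_comp hT g, measurableSet_preimage_comp_singleton hτ hT g⟩
  have hrange : hsimple.1.toFinset ⊆ T.image g := by
    intro y hy
    obtain ⟨s, rfl⟩ := hsimple.1.mem_toFinset.mp hy
    exact Finset.mem_image_of_mem g (hT s)
  rw [fInt, dif_pos hsimple]
  calc ∑ y ∈ hsimple.1.toFinset, y * p ⟨_, hsimple.2 y⟩
      = ∑ y ∈ T.image g, y * p ⟨_, hsimple.2 y⟩ := by
        refine Finset.sum_subset hrange fun y _ hy => ?_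
        have hempty : (fun s => g (τ s)) ⁻¹' {y} = ∅ :=
          eq_empty_of_forall_notMem fun s hs => hy (hsimple.1.mem_toFinset.mpr ⟨s, hs⟩)
        rw [probCharge_congr p (ht := .empty) hempty, probCharge_empty hp, mul_zero]
    _ = ∑ y ∈ T.image g, ∑ i ∈ T.filter (g · = y), g i * p ⟨τ ⁻¹' {i}, hτ i⟩ := by
        refine Finset.sum_congr rfl fun y _ => ?_
        rw [probCharge_congr p (ht := measurableSet_preimage_finset hτ _)
          (preimage_comp_singleton_eq hT g y), probCharge_preimage_finset hp hτ, Finset.mul_sum]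
        exact Finset.sum_congr rfl fun i hi => by rw [(Finset.mem_filter.mp hi).2]
    _ = ∑ i ∈ T, g i * p ⟨τ ⁻¹' {i}, hτ i⟩ :=
        Finset.sum_fiberwise_of_maps_to (fun i hi => Finset.mem_image_of_mem g hi) _

end SimpleIntegral

section Atoms

variable {S : Type*} [MeasurableSpace S] {p : MSet S → ℝ}

open Classical in
/-- The fibres of `eventsContaining I` are the atoms of the algebra generated by `I`. -/
noncomputable def eventsContaining (I : Finset (MSet S)) (s : S) : Finset (MSet S) :=
  I.filter (s ∈ ·.1)

lemma mem_eventsContaining {I : Finset (MSet S)} {s : S} {A : MSet S} :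
    A ∈ eventsContaining I s ↔ A ∈ I ∧ s ∈ A.1 := by
  classical
  simp [eventsContaining]

lemma eventsContaining_mem_powerset (I : Finset (MSet S)) (s : S) :
    eventsContaining I s ∈ I.powerset :=
  Finset.mem_powerset.mpr fun _ hA => (mem_eventsContaining.mp hA).1

lemma measurableSet_eventsContaining_preimage (I σ : Finset (MSet S)) :
    MeasurableSet (eventsContaining I ⁻¹' {σ}) := by
  classical
  by_cases hσ : σ ⊆ I
  · have h : eventsContaining I ⁻¹' {σ} = ⋂ A ∈ I, {s | s ∈ A.1 ↔ A ∈ σ} := by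
      ext s
      simp only [mem_preimage, mem_singleton_iff, mem_iInter, mem_ofPred_eq, Finset.ext_iff,
        mem_eventsContaining]
      exact ⟨fun h A hA => (and_iff_right hA).symm.trans (h A),
        fun h A => ⟨fun hA => (h A hA.1).mp hA.2, fun hA => ⟨hσ hA, (h A (hσ hA)).mpr hA⟩⟩⟩
    rw [h]
    refine Finset.measurableSet_biInter I fun A _ => ?_
    by_cases hA : A ∈ σ <;> simp only [hA, iff_true, iff_false]
    exacts [A.2, A.2.compl]
  · convert MeasurableSet.empty
    refine eq_empty_of_forall_notMem fun s hs => hσ ?_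
    rw [← mem_singleton_iff.mp hs]
    exact fun A hA => (mem_eventsContaining.mp hA).1

lemma sum_powerset_mul_probCharge_atom (hp : p ∈ ProbCharges S) (I : Finset (MSet S))
    (c : MSet S → ℝ) :
    ∑ σ ∈ I.powerset, (∑ A ∈ σ, c A) *
        p ⟨eventsContaining I ⁻¹' {σ}, measurableSet_eventsContaining_preimage I σ⟩ =
      ∑ A ∈ I, c A * p A := by
  classical
  have hA : ∀ A ∈ I, eventsContaining I ⁻¹' ↑(I.powerset.filter (A ∈ ·)) = A.1 := by
    intro A hAI
    ext s
    simp [mem_eventsContaining, hAI, Finset.mem_powerset.mp (eventsContaining_mem_powerset I s)]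
  simp_rw [Finset.sum_mul]
  rw [Finset.sum_comm' (t' := I) (s' := fun A => I.powerset.filter (A ∈ ·))
    (fun σ A => by simp only [Finset.mem_filter, Finset.mem_powerset]; grind)]
  refine Finset.sum_congr rfl fun A hAI => ?_
  rw [← Finset.mul_sum, ← probCharge_preimage_finset hp
    (measurableSet_eventsContaining_preimage I)]
  exact congrArg _ (probCharge_congr p (hA A hAI))

end Atoms

section ExpectedUtility

variable {S : Type*} [MeasurableSpace S] {V : Type*} {X : Set V} {u : V → ℝ}
  {C : Set (MSet S → ℝ)}

lemma measurableSet_constAct_preimage (x v : V) : MeasurableSet (constAct S x ⁻¹' {v}) := by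
  classical
  rw [show constAct S x = fun _ => x from rfl, preimage_const]
  split_ifs
  exacts [.univ, .empty]

lemma isAct_comp {ι : Type*} {τ : S → ι} (hτ : ∀ i, MeasurableSet (τ ⁻¹' {i}))
    {T : Finset ι} (hT : ∀ s, τ s ∈ T) {g : ι → V} (hg : ∀ i ∈ T, g i ∈ X) :
    IsAct X (fun s => g (τ s)) :=
  ⟨fun s => hg _ (hT s), finite_range_comp hT g, measurableSet_preimage_comp_singleton hτ hT g⟩

lemma constAct_isAct {x : V} (hx : x ∈ X) : IsAct X (constAct S x) :=
  ⟨fun _ => hx, (finite_singleton x).subset range_const_subset,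
    measurableSet_constAct_preimage x⟩

lemma EU_constAct {p : MSet S → ℝ} (hp : p ∈ ProbCharges S) (x : V) :
    EU u (constAct S x) p = u x := by
  have h : EU u (constAct S x) p = ∑ v ∈ {x}, u v * p ⟨_, measurableSet_constAct_preimage x v⟩ :=
    fInt_comp_eq_sum hp _ (fun _ => Finset.mem_singleton_self x) u
  have hfibre : constAct S x ⁻¹' {x} = univ := preimage_const_of_mem (mem_singleton x)
  rw [h, Finset.sum_singleton, probCharge_congr p (ht := .univ) hfibre, hp.2.1, mul_one]

lemma exists_bounds_EU [Nonempty S] {f : S → V} (hf : IsAct X f) :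
    ∃ s₁ s₂ : S, ∀ p ∈ ProbCharges S, u (f s₁) ≤ EU u f p ∧ EU u f p ≤ u (f s₂) := by
  classical
  set T := hf.2.1.toFinset
  have hT : ∀ s, f s ∈ T := fun s => hf.2.1.mem_toFinset.mpr ⟨s, rfl⟩
  have hTne : T.Nonempty := ⟨_, hT (Classical.arbitrary S)⟩
  obtain ⟨_, hv₁, hmin⟩ := T.exists_min_image u hTne
  obtain ⟨_, hv₂, hmax⟩ := T.exists_max_image u hTne
  obtain ⟨s₁, rfl⟩ := hf.2.1.mem_toFinset.mp hv₁
  obtain ⟨s₂, rfl⟩ := hf.2.1.mem_toFinset.mp hv₂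
  refine ⟨s₁, s₂, fun p hp => ?_⟩
  set w : V → ℝ := fun v => p ⟨f ⁻¹' {v}, hf.2.2 v⟩
  have hEU : EU u f p = ∑ v ∈ T, u v * w v := fInt_comp_eq_sum hp hf.2.2 hT u
  have hw : ∑ v ∈ T, w v = 1 := sum_probCharge_fibres_eq_one hp hf.2.2 hT
  constructor
  · calc u (f s₁) = ∑ v ∈ T, u (f s₁) * w v := by rw [← Finset.mul_sum, hw, mul_one]
      _ ≤ EU u f p := hEU ▸ Finset.sum_le_sum fun v hv =>
          mul_le_mul_of_nonneg_right (hmin v hv) (hp.1 _)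
  · calc EU u f p ≤ ∑ v ∈ T, u (f s₂) * w v := hEU ▸ Finset.sum_le_sum fun v hv =>
          mul_le_mul_of_nonneg_right (hmax v hv) (hp.1 _)
      _ = u (f s₂) := by rw [← Finset.mul_sum, hw, mul_one]

lemma bddBelow_EU_image [Nonempty S] {f : S → V} (hf : IsAct X f) (hC : C ⊆ ProbCharges S) :
    BddBelow (EU u f '' C) := by
  obtain ⟨s₁, _, hb⟩ := exists_bounds_EU (u := u) hf
  exact ⟨u (f s₁), forall_mem_image.mpr fun p hp => (hb p (hC hp)).1⟩

lemma bddAbove_EU_image [Nonempty S] {f : S → V} (hf : IsAct X f) (hC : C ⊆ ProbCharges S) :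
    BddAbove (EU u f '' C) := by
  obtain ⟨_, s₂, hb⟩ := exists_bounds_EU (u := u) hf
  exact ⟨u (f s₂), forall_mem_image.mpr fun p hp => (hb p (hC hp)).2⟩

lemma minEU_le_EU [Nonempty S] {f : S → V} (hf : IsAct X f) (hC : C ⊆ ProbCharges S)
    {p : MSet S → ℝ} (hp : p ∈ C) : minEU u C f ≤ EU u f p :=
  csInf_le (bddBelow_EU_image hf hC) (mem_image_of_mem _ hp)

lemma EU_le_maxEU [Nonempty S] {f : S → V} (hf : IsAct X f) (hC : C ⊆ ProbCharges S)
    {p : MSet S → ℝ} (hp : p ∈ C) : EU u f p ≤ maxEU u C f :=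
  le_csSup (bddAbove_EU_image hf hC) (mem_image_of_mem _ hp)

lemma minEU_constAct (hCne : C.Nonempty) (hC : C ⊆ ProbCharges S) (x : V) :
    minEU u C (constAct S x) = u x := by
  rw [minEU, image_congr fun p hp => EU_constAct (u := u) (hC hp) x, hCne.image_const,
    csInf_singleton]

lemma maxEU_constAct (hCne : C.Nonempty) (hC : C ⊆ ProbCharges S) (x : V) :
    maxEU u C (constAct S x) = u x := by
  rw [maxEU, image_congr fun p hp => EU_constAct (u := u) (hC hp) x, hCne.image_const,
    csSup_singleton]

lemma minEU_mem_Icc {f : S → V} {m M : ℝ}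
    (hb : ∀ p ∈ ProbCharges S, m ≤ EU u f p ∧ EU u f p ≤ M) (hCne : C.Nonempty)
    (hC : C ⊆ ProbCharges S) : minEU u C f ∈ Icc m M :=
  ⟨le_csInf (hCne.image _) (forall_mem_image.mpr fun p hp => (hb p (hC hp)).1),
    (csInf_le ⟨m, forall_mem_image.mpr fun p hp => (hb p (hC hp)).1⟩
      (mem_image_of_mem _ hCne.some_mem)).trans (hb _ (hC hCne.some_mem)).2⟩

lemma minEU_le_minEU_of_subset [Nonempty S] {C' : Set (MSet S → ℝ)} {f : S → V}
    (hf : IsAct X f) (hC : C ⊆ ProbCharges S) (hC'ne : C'.Nonempty) (hC' : C' ⊆ C) :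
    minEU u C f ≤ minEU u C' f :=
  csInf_le_csInf (bddBelow_EU_image hf hC) (hC'ne.image _) (image_mono hC')

lemma NonConstOn.exists_lt (h : NonConstOn u X) : ∃ x₀ ∈ X, ∃ x₁ ∈ X, u x₀ < u x₁ := by
  obtain ⟨y, hy, z, hz, hyz⟩ := h
  rcases hyz.lt_or_gt with h | h
  exacts [⟨y, hy, z, hz, h⟩, ⟨z, hz, y, hy, h⟩]

end ExpectedUtility

lemma exists_finset_sum_mul_separation {ι : Type*} {C : Set (ι → ℝ)} (hCc : IsCompact C)
    (hCv : Convex ℝ C) {q : ι → ℝ} (hq : q ∉ C) :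
    ∃ (I : Finset ι) (c : ι → ℝ) (t : ℝ),
      ∑ i ∈ I, c i * q i < t ∧ ∀ p ∈ C, t < ∑ i ∈ I, c i * p i := by
  classical
  obtain ⟨I, w, hw, hwC⟩ := isOpen_pi_iff.mp hCc.isClosed.isOpen_compl q hq
  let π : (ι → ℝ) →L[ℝ] (I → ℝ) := ContinuousLinearMap.pi fun i => ContinuousLinearMap.proj i.1
  have hπq : π q ∉ π '' C := by
    rintro ⟨p, hpC, hpq⟩
    refine hwC (fun i hi => ?_) hpC
    rw [show p i = q i from congrFun hpq ⟨i, hi⟩]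
    exact (hw i hi).2
  obtain ⟨ℓ, t, hℓq, hℓC⟩ := geometric_hahn_banach_point_closed
    (hCv.linear_image π.toLinearMap) (hCc.image π.continuous).isClosed hπq
  let c : ι → ℝ := fun i => if h : i ∈ I then ℓ (fun j => if ⟨i, h⟩ = j then 1 else 0) else 0
  have hc : ∀ p : ι → ℝ, ∑ i ∈ I, c i * p i = ℓ (π p) := by
    intro p
    rw [← ContinuousLinearMap.coe_coe ℓ, LinearMap.pi_apply_eq_sum_univ, ← Finset.sum_coe_sort I]
    exact Finset.sum_congr rfl fun i _ => by simp [c, π, mul_comm]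
  refine ⟨I, c, t, (hc q).symm ▸ hℓq, fun p hp => (hc p).symm ▸ hℓC _ (mem_image_of_mem π hp)⟩

section Construction

variable {S : Type*} [MeasurableSpace S] {V : Type*} [AddCommGroup V] [Module ℝ V]
  {X : Set V} {u : V → ℝ}

lemma IsAffineOn.exists_mem_eq (hX : Convex ℝ X) (hu : IsAffineOn u X) {x₁ x₂ : V}
    (hx₁ : x₁ ∈ X) (hx₂ : x₂ ∈ X) {t : ℝ} (h₁ : u x₁ ≤ t) (h₂ : t ≤ u x₂) :
    ∃ x ∈ X, u x = t := by
  rcases h₁.eq_or_lt with heq | hlt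
  · exact ⟨x₁, hx₁, heq⟩
  have hne : u x₂ - u x₁ ≠ 0 := by linarith
  set α := (u x₂ - t) / (u x₂ - u x₁)
  have hα₀ : 0 ≤ α := div_nonneg (by linarith) (by linarith)
  have hα₁ : α ≤ 1 := (div_le_one (by linarith)).mpr (by linarith)
  refine ⟨α • x₁ + (1 - α) • x₂, hX hx₁ hx₂ hα₀ (by linarith) (by ring), ?_⟩
  rw [hu x₁ hx₁ x₂ hx₂ α hα₀ hα₁]
  simp only [α]
  field_simp
  ring

lemma exists_isAct_EU_eq (hX : Convex ℝ X) (hu : IsAffineOn u X) {x₀ x₁ : V}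
    (hx₀ : x₀ ∈ X) (hx₁ : x₁ ∈ X) (hlt : u x₀ < u x₁) (I : Finset (MSet S)) (c : MSet S → ℝ) :
    ∃ f, IsAct X f ∧ ∃ a > 0, ∃ b, ∀ p ∈ ProbCharges S,
      EU u f p = b + a * ∑ A ∈ I, c A * p A := by
  set K := ∑ A ∈ I, |c A|
  set d := 2 * K + 1
  have hd : 0 < d := by positivity
  set F : Finset (MSet S) → ℝ := fun σ => ∑ A ∈ σ, c A
  set w : Finset (MSet S) → ℝ := fun σ => (F σ + K) / d
  have hw : ∀ σ ∈ I.powerset, 0 ≤ w σ ∧ w σ ≤ 1 := by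
    intro σ hσ
    have hFK : |F σ| ≤ K := (Finset.abs_sum_le_sum_abs _ _).trans
      (Finset.sum_le_sum_of_subset_of_nonneg (Finset.mem_powerset.mp hσ)
        fun _ _ _ => abs_nonneg _)
    rw [abs_le] at hFK
    exact ⟨div_nonneg (by linarith) hd.le, (div_le_one hd).mpr (by linarith)⟩
  set g : Finset (MSet S) → V := fun σ => w σ • x₁ + (1 - w σ) • x₀
  have hgX : ∀ σ ∈ I.powerset, g σ ∈ X := fun σ hσ =>
    hX hx₁ hx₀ (hw σ hσ).1 (by linarith [(hw σ hσ).2]) (by ring)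
  set a := (u x₁ - u x₀) / d
  set b := u x₀ + a * K
  have hug : ∀ σ ∈ I.powerset, u (g σ) = b + a * F σ := by
    intro σ hσ
    rw [hu x₁ hx₁ x₀ hx₀ _ (hw σ hσ).1 (hw σ hσ).2]
    field_simp
    ring
  have hτ := measurableSet_eventsContaining_preimage I
  have hT := eventsContaining_mem_powerset I
  refine ⟨_, isAct_comp hτ hT hgX, a, div_pos (by linarith) hd, b, fun p hp => ?_⟩
  calc EU u (fun s => g (eventsContaining I s)) p
      = ∑ σ ∈ I.powerset, u (g σ) * p ⟨_, hτ σ⟩ := fInt_comp_eq_sum hp hτ hT (fun σ => u (g σ))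
    _ = b * ∑ σ ∈ I.powerset, p ⟨_, hτ σ⟩ + a * ∑ σ ∈ I.powerset, F σ * p ⟨_, hτ σ⟩ := by
        rw [Finset.mul_sum, Finset.mul_sum, ← Finset.sum_add_distrib]
        exact Finset.sum_congr rfl fun σ hσ => by rw [hug σ hσ]; ring
    _ = b + a * ∑ A ∈ I, c A * p A := by
        rw [sum_probCharge_fibres_eq_one hp hτ hT, sum_powerset_mul_probCharge_atom hp, mul_one]

end Construction

section HopeAndPrepare

variable {S : Type*} [MeasurableSpace S] [Nonempty S] {V : Type*} [AddCommGroup V]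
  [Module ℝ V] {X : Set V} {u : V → ℝ}

/-- Against a constant act only the cautious criterion binds: a prior in `C ∩ D` gives
`minEU u C f ≤ maxEU u D f`. -/
lemma IsHPRep.rel_constAct_iff {R : (S → V) → (S → V) → Prop} {C D : Set (MSet S → ℝ)}
    (h : IsHPRep X R u C D) {f : S → V} (hf : IsAct X f) {x : V} (hx : x ∈ X) :
    R f (constAct S x) ↔ u x < minEU u C f := by
  obtain ⟨-, -, hCne, hDne, hCP, hDP, -, -, -, -, ⟨p, hpC, hpD⟩, hR⟩ := h
  rw [hR f _ hf (constAct_isAct hx), minEU_constAct hCne hCP, maxEU_constAct hDne hDP,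
    and_iff_left_iff_imp]
  exact fun hlt => hlt.trans_le ((minEU_le_EU hf hCP hpC).trans (EU_le_maxEU hf hDP hpD))

lemma IsHPRep.minEU_le_minEU_of_moreAverse (hX : Convex ℝ X)
    {R₁ R₂ : (S → V) → (S → V) → Prop} {C₁ D₁ C₂ D₂ : Set (MSet S → ℝ)}
    (h₁ : IsHPRep X R₁ u C₁ D₁) (h₂ : IsHPRep X R₂ u C₂ D₂)
    (H : ∀ f, IsAct X f → ∀ x ∈ X, R₁ f (constAct S x) → R₂ f (constAct S x))
    {f : S → V} (hf : IsAct X f) : minEU u C₁ f ≤ minEU u C₂ f := by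
  have ⟨hu, _, hC₁ne, _, hC₁P, _⟩ := h₁
  have ⟨_, _, hC₂ne, _, hC₂P, _⟩ := h₂
  by_contra! hlt
  obtain ⟨s₁, s₂, hb⟩ := exists_bounds_EU (u := u) hf
  have hmem₁ := minEU_mem_Icc hb hC₁ne hC₁P
  have hmem₂ := minEU_mem_Icc hb hC₂ne hC₂P
  obtain ⟨x, hx, hux⟩ := hu.exists_mem_eq hX (hf.1 s₁) (hf.1 s₂)
    (t := (minEU u C₁ f + minEU u C₂ f) / 2) (by linarith [hmem₂.1]) (by linarith [hmem₁.2])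
  have hR₂ := H f hf x hx ((h₁.rel_constAct_iff hf hx).mpr (by linarith))
  rw [h₂.rel_constAct_iff hf hx] at hR₂
  linarith

end HopeAndPrepare

section Statement

variable {S : Type*} [MeasurableSpace S] [Nonempty S]
variable {V : Type*} [AddCommGroup V] [Module ℝ V]

theorem statement6_general (X : Set V) (hX : Convex ℝ X)
    (R1 R2 : (S → V) → (S → V) → Prop) (u : V → ℝ)
    (C1 D1 C2 D2 : Set (MSet S → ℝ))
    (h1 : IsHPRep X R1 u C1 D1) (h2 : IsHPRep X R2 u C2 D2) :
    (∀ f, IsAct X f → ∀ x ∈ X, R1 f (constAct S x) → R2 f (constAct S x)) ↔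
      C2 ⊆ C1 := by
  have ⟨hu, hnc, hC1ne, _, hC1P, _, hC1c, _, hC1v, _⟩ := h1
  have ⟨_, _, hC2ne, _, hC2P, _⟩ := h2
  constructor
  · intro H q hqC2
    by_contra hqC1
    obtain ⟨I, c, t, hq, hC1⟩ := exists_finset_sum_mul_separation hC1c hC1v hqC1
    obtain ⟨x₀, hx₀, x₁, hx₁, hlt⟩ := hnc.exists_lt
    obtain ⟨f, hf, a, ha, b, hEU⟩ := exists_isAct_EU_eq hX hu hx₀ hx₁ hlt I c
    have hC1f : b + a * t ≤ minEU u C1 f := le_csInf (hC1ne.image _) <|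
      forall_mem_image.mpr fun p hp => by
        rw [hEU p (hC1P hp)]; gcongr; exact (hC1 p hp).le
    have hC2f : minEU u C2 f < b + a * t := (minEU_le_EU hf hC2P hqC2).trans_lt <| by
      rw [hEU q (hC2P hqC2)]; gcongr
    linarith [h1.minEU_le_minEU_of_moreAverse hX h2 H hf]
  · intro hsub f hf x hx hR1
    rw [h1.rel_constAct_iff hf hx] at hR1
    rw [h2.rel_constAct_iff hf hx]
    exact hR1.trans_le (minEU_le_minEU_of_subset hf hC1P hC2ne hsub)

/-- Proposition 2(i): for hope-and-prepare preferences `≻₁`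
and `≻₂` with representations `(u, C₁, D₁)` and `(u, C₂, D₂)`, `≻₁` is more
ambiguity averse than `≻₂` iff `C₂ ⊆ C₁`. -/
theorem statement6 (X : Set V) (hX : Convex ℝ X) (hX2 : ∃ x ∈ X, ∃ y ∈ X, x ≠ y)
    (R1 R2 : (S → V) → (S → V) → Prop) (u : V → ℝ)
    (C1 D1 C2 D2 : Set (MSet S → ℝ))
    (h1 : IsHPRep X R1 u C1 D1) (h2 : IsHPRep X R2 u C2 D2) :
    (∀ f, IsAct X f → ∀ x ∈ X, R1 f (constAct S x) → R2 f (constAct S x)) ↔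
      C2 ⊆ C1 :=
  statement6_general X hX R1 R2 u C1 D1 C2 D2 h1 h2

end Statement
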